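/- Let B be an invertible symmetric real d×d matrix and let w ∈ ℝ^d satisfy (w,w) = wᵀBw > 0. Define Φ : ℝ^d → ℝ by Φ(x) = 2∫_0^{(w,x)/√(w,w)} e^{−πs²} ds (i.e. Φ(x) = Erf(√π·(w,x)/√(w,w))). Then Φ is smooth and satisfies Vignéras' equation with λ = 0: V_0 Φ = 0 on all of ℝ^d. -/

import Mathlib

/-- Partial derivative in direction `i` of a function on `ℝ^d`. -/
noncomputable def pd {d : ℕ} (i : Fin d) (f : (Fin d → ℝ) → ℂ) : (Fin d → ℝ) → ℂ :=
  fun x => fderiv ℝ f x (Pi.single i 1)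

/-- Vignéras operator `V_λ f = ∑ (B⁻¹)_{ij} ∂_i∂_j f + 2π(∑ x_i ∂_i f − λ f)`. -/
noncomputable def Vop {d : ℕ} (B : Matrix (Fin d) (Fin d) ℝ) (lam : ℝ)
    (f : (Fin d → ℝ) → ℂ) : (Fin d → ℝ) → ℂ :=
  fun x =>
    (∑ i, ∑ j, ((B⁻¹ i j : ℝ) : ℂ) * pd i (pd j f) x)
      + 2 * (Real.pi : ℂ) * ((∑ i, (x i : ℂ) * pd i f x) - (lam : ℂ) * f x)

/-! `Φ` is the ridge function `x ↦ F (a ⬝ᵥ x)` with `F = erfSqrtPi` and `a = (wᵀB)/√(w,w)`. On ridge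
functions the Vignéras operator acts as `(aᵀB⁻¹a) F'' + 2π (t F' - λ F)` at `t = a ⬝ᵥ x`. The
normalisation of `a` makes `aᵀB⁻¹a = (w,w)/(w,w) = 1`, and `F' = 2e^{-πt²}` satisfies
`F'' = -2πt F'`, so `V₀ Φ = 0`. -/

open Real Matrix
open scoped ContDiff

noncomputable def erfSqrtPi (t : ℝ) : ℝ := 2 * ∫ s in (0:ℝ)..t, exp (-(π * s ^ 2))

lemma hasDerivAt_erfSqrtPi (t : ℝ) : HasDerivAt erfSqrtPi (2 * exp (-(π * t ^ 2))) t := by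
  have hc : Continuous fun s : ℝ => exp (-(π * s ^ 2)) := by fun_prop
  exact (intervalIntegral.integral_hasDerivAt_right (hc.intervalIntegrable 0 t)
    (hc.stronglyMeasurableAtFilter _ _) hc.continuousAt).const_mul 2

lemma contDiff_erfSqrtPi : ContDiff ℝ ∞ erfSqrtPi := by
  rw [contDiff_infty_iff_deriv]
  refine ⟨fun t => (hasDerivAt_erfSqrtPi t).differentiableAt, ?_⟩
  rw [funext fun t => (hasDerivAt_erfSqrtPi t).deriv]
  fun_prop

lemma hasDerivAt_two_mul_exp_neg_pi_mul_sq (t : ℝ) :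
    HasDerivAt (fun t => 2 * exp (-(π * t ^ 2))) (-(2 * π * t) * (2 * exp (-(π * t ^ 2)))) t :=
  (((hasDerivAt_pow 2 t).const_mul π).fun_neg.exp.const_mul 2).congr_deriv (by push_cast; ring)

lemma sum_sum_mul_mul_eq_vecMul_dotProduct {n : Type*} [Fintype n]
    (B : Matrix n n ℝ) (w x : n → ℝ) :
    ∑ i, ∑ j, w i * B i j * x j = (w ᵥ* B) ⬝ᵥ x := by
  simp only [dotProduct, vecMul, Finset.sum_mul]
  exact Finset.sum_comm

lemma vecMul_dotProduct_nonsing_inv_mulVec {n : Type*} [Fintype n] [DecidableEq n]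
    {B : Matrix n n ℝ} (hB : IsUnit B.det) (w v : n → ℝ) :
    (w ᵥ* B) ⬝ᵥ (B⁻¹ *ᵥ v) = w ⬝ᵥ v := by
  rw [← dotProduct_mulVec, mulVec_mulVec, mul_nonsing_inv _ hB, one_mulVec]

lemma dotProduct_nonsing_inv_mulVec_normalized {n : Type*} [Fintype n] [DecidableEq n]
    {B : Matrix n n ℝ} (hB : IsUnit B.det) {w : n → ℝ} (hw : 0 < (w ᵥ* B) ⬝ᵥ w) :
    ((√((w ᵥ* B) ⬝ᵥ w))⁻¹ • (w ᵥ* B)) ⬝ᵥ (B⁻¹ *ᵥ ((√((w ᵥ* B) ⬝ᵥ w))⁻¹ • (w ᵥ* B))) = 1 := by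
  rw [mulVec_smul, smul_dotProduct, dotProduct_smul, vecMul_dotProduct_nonsing_inv_mulVec hB,
    dotProduct_comm w, smul_eq_mul, smul_eq_mul, ← mul_assoc, ← mul_inv, mul_self_sqrt hw.le,
    inv_mul_cancel₀ hw.ne']

lemma hasFDerivAt_ofReal_comp_dotProduct {n : Type*} [Fintype n] {G G' : ℝ → ℝ}
    (hG : ∀ t, HasDerivAt G (G' t) t) (a y : n → ℝ) :
    HasFDerivAt (fun x => (G (a ⬝ᵥ x) : ℂ))
      (((1 : ℝ →L[ℝ] ℝ).smulRight (G' (a ⬝ᵥ y) : ℂ)).comp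
        (LinearMap.toContinuousLinearMap (dotProductBilin ℝ ℝ a))) y :=
  (hG _).ofReal_comp.hasFDerivAt.comp y
    (LinearMap.toContinuousLinearMap (dotProductBilin ℝ ℝ a)).hasFDerivAt

lemma pd_ofReal_comp_dotProduct {d : ℕ} {G G' : ℝ → ℝ} (hG : ∀ t, HasDerivAt G (G' t) t)
    (a : Fin d → ℝ) (i : Fin d) :
    pd i (fun x => (G (a ⬝ᵥ x) : ℂ)) = fun x => ((a i * G' (a ⬝ᵥ x) : ℝ) : ℂ) := by
  ext y
  simp [pd, (hasFDerivAt_ofReal_comp_dotProduct hG a y).fderiv, dotProduct_single]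

lemma vop_ofReal_comp_dotProduct {d : ℕ} (B : Matrix (Fin d) (Fin d) ℝ) (lam : ℝ)
    {F F' F'' : ℝ → ℝ} (hF : ∀ t, HasDerivAt F (F' t) t) (hF' : ∀ t, HasDerivAt F' (F'' t) t)
    (a x : Fin d → ℝ) :
    Vop B lam (fun y => (F (a ⬝ᵥ y) : ℂ)) x =
      ((a ⬝ᵥ (B⁻¹ *ᵥ a) * F'' (a ⬝ᵥ x)
        + 2 * π * (a ⬝ᵥ x * F' (a ⬝ᵥ x) - lam * F (a ⬝ᵥ x)) : ℝ) : ℂ) := by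
  have hpd2 : ∀ i j, pd i (pd j fun y => (F (a ⬝ᵥ y) : ℂ)) x
      = ((a i * (a j * F'' (a ⬝ᵥ x)) : ℝ) : ℂ) := fun i j => by
    rw [pd_ofReal_comp_dotProduct hF,
      pd_ofReal_comp_dotProduct (G := fun t => a j * F' t) fun t => (hF' t).const_mul (a j)]
  have hquad : ∑ i, ∑ j, B⁻¹ i j * (a i * (a j * F'' (a ⬝ᵥ x)))
      = a ⬝ᵥ (B⁻¹ *ᵥ a) * F'' (a ⬝ᵥ x) := by
    simp only [dotProduct, mulVec, Finset.mul_sum, Finset.sum_mul]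
    exact Finset.sum_congr rfl fun i _ => Finset.sum_congr rfl fun j _ => by ring
  have hlin : ∑ i, x i * (a i * F' (a ⬝ᵥ x)) = a ⬝ᵥ x * F' (a ⬝ᵥ x) := by
    simp only [dotProduct, Finset.sum_mul]
    exact Finset.sum_congr rfl fun i _ => by ring
  simp only [Vop, hpd2]
  simp only [pd_ofReal_comp_dotProduct hF, ← Complex.ofReal_mul, ← Complex.ofReal_sum, hquad,
    hlin]
  push_cast
  ring

theorem erf_solves_vigneras_general {d : ℕ} (B : Matrix (Fin d) (Fin d) ℝ)
    (hinv : IsUnit B.det) (w : Fin d → ℝ)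
    (hw : 0 < ∑ i, ∑ j, w i * B i j * w j) :
    ContDiff ℝ (⊤ : ℕ∞) (fun x : Fin d → ℝ =>
      2 * ∫ s in (0:ℝ)..((∑ i, ∑ j, w i * B i j * x j) /
          Real.sqrt (∑ i, ∑ j, w i * B i j * w j)),
        Real.exp (-(Real.pi * s ^ 2))) ∧
    ∀ x : Fin d → ℝ,
      Vop B 0 (fun y => (Complex.ofReal
        (2 * ∫ s in (0:ℝ)..((∑ i, ∑ j, w i * B i j * y j) /
            Real.sqrt (∑ i, ∑ j, w i * B i j * w j)),
          Real.exp (-(Real.pi * s ^ 2))))) x = 0 := by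
  simp only [sum_sum_mul_mul_eq_vecMul_dotProduct] at hw ⊢
  set a := (√((w ᵥ* B) ⬝ᵥ w))⁻¹ • (w ᵥ* B) with ha
  have hΦ : ∀ x, (w ᵥ* B) ⬝ᵥ x / √((w ᵥ* B) ⬝ᵥ w) = a ⬝ᵥ x := fun x => by
    rw [ha, smul_dotProduct, smul_eq_mul, inv_mul_eq_div]
  simp only [hΦ]
  change ContDiff ℝ ∞ (fun x => erfSqrtPi (a ⬝ᵥ x)) ∧
    ∀ x, Vop B 0 (fun y => (erfSqrtPi (a ⬝ᵥ y) : ℂ)) x = 0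
  refine ⟨contDiff_erfSqrtPi.comp
    (LinearMap.toContinuousLinearMap (dotProductBilin ℝ ℝ a)).contDiff, fun x => ?_⟩
  rw [vop_ofReal_comp_dotProduct B 0 hasDerivAt_erfSqrtPi hasDerivAt_two_mul_exp_neg_pi_mul_sq,
    dotProduct_nonsing_inv_mulVec_normalized hinv hw]
  push_cast
  ring

/-- for an invertible symmetric `B` and `w` with `wᵀBw > 0`, the function
`Φ(x) = 2∫_0^{(w,x)/√(w,w)} e^{−πs²} ds = Erf(√π (w,x)/√(w,w))` is smooth and satisfies
Vignéras' equation with `λ = 0` on all of `ℝ^d`. -/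
theorem erf_solves_vigneras {d : ℕ} (hd : 1 ≤ d) (B : Matrix (Fin d) (Fin d) ℝ)
    (hsymm : B.IsSymm) (hinv : IsUnit B.det) (w : Fin d → ℝ)
    (hw : 0 < ∑ i, ∑ j, w i * B i j * w j) :
    ContDiff ℝ (⊤ : ℕ∞) (fun x : Fin d → ℝ =>
      2 * ∫ s in (0:ℝ)..((∑ i, ∑ j, w i * B i j * x j) /
          Real.sqrt (∑ i, ∑ j, w i * B i j * w j)),
        Real.exp (-(Real.pi * s ^ 2))) ∧
    ∀ x : Fin d → ℝ,
      Vop B 0 (fun y => (Complex.ofReal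
        (2 * ∫ s in (0:ℝ)..((∑ i, ∑ j, w i * B i j * y j) /
            Real.sqrt (∑ i, ∑ j, w i * B i j * w j)),
          Real.exp (-(Real.pi * s ^ 2))))) x = 0 :=
  erf_solves_vigneras_general B hinv w hw
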